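/- Let P be a finitely additive probability function into an ordered field extension K of ℝ with all values in [0,1], and suppose B is partitioned into B_d and B_{>d} with P(B_{>d})/P(B) infinitesimal and P(B) > 0, P(B_d) > 0. Then for any A ⊆ B, st(P(A)/P(B)) = st(P(A ∩ B_d)/P(B_d)). -/

import Mathlib

/-!
Split `A = (A ∩ B_d) ∪ (A ∩ B_{>d})` and `B = B_d ∪ B_{>d}`. Writing `a, g, D, G` for the
probabilities of these four pieces,
`(a + g)/(D + G) - a/D = g/(D + G) - (a/D) · G/(D + G)`,
and both terms on the right are bounded by the infinitesimal `G/(D + G)`. Two elements of `[0,1]`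
at infinitesimal distance have the same standard part, because a real number that is
infinitesimal in `K` is `0`.
-/

theorem RingHom.strictMono_of_real {K : Type*} [Field K] [LinearOrder K] [IsStrictOrderedRing K]
    (ι : ℝ →+* K) : StrictMono ι :=
  (ringHom_monotone (fun _ ↦ Real.isSquare_iff.mpr) ι).strictMono_of_injective ι.injective

section Infinitesimal

variable {K : Type*} [Field K] [LinearOrder K] (ι : ℝ →+* K)

def IsInfinitesimal (x : K) : Prop :=
  ∀ n : ℕ, 0 < n → |x| < ι (1 / n)

variable {ι}

theorem IsInfinitesimal.of_abs_le {x y : K} (hy : IsInfinitesimal ι y) (hxy : |x| ≤ |y|) :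
    IsInfinitesimal ι x :=
  fun n hn ↦ hxy.trans_lt (hy n hn)

theorem IsInfinitesimal.neg {x : K} (hx : IsInfinitesimal ι x) : IsInfinitesimal ι (-x) :=
  hx.of_abs_le (abs_neg x).le

variable [IsStrictOrderedRing K]

theorem IsInfinitesimal.of_nonneg_of_le {x y : K} (hy : IsInfinitesimal ι y) (hx : 0 ≤ x)
    (hxy : x ≤ y) : IsInfinitesimal ι x :=
  hy.of_abs_le (by rwa [abs_of_nonneg hx, abs_of_nonneg (hx.trans hxy)])

theorem IsInfinitesimal.add {x y : K} (hx : IsInfinitesimal ι x) (hy : IsInfinitesimal ι y) :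
    IsInfinitesimal ι (x + y) := by
  intro n hn
  have h2n : 0 < 2 * n := by positivity
  have halves : ι (1 / (2 * n : ℕ)) + ι (1 / (2 * n : ℕ)) = ι (1 / n) := by
    rw [← map_add]
    congr 1
    push_cast
    field_simp
    norm_num
  calc |x + y| ≤ |x| + |y| := abs_add_le x y
    _ < ι (1 / (2 * n : ℕ)) + ι (1 / (2 * n : ℕ)) := add_lt_add (hx _ h2n) (hy _ h2n)
    _ = ι (1 / n) := halves

theorem IsInfinitesimal.sub {x y : K} (hx : IsInfinitesimal ι x) (hy : IsInfinitesimal ι y) :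
    IsInfinitesimal ι (x - y) := by
  simpa only [sub_eq_add_neg] using hx.add hy.neg

theorem isInfinitesimal_map_iff {r : ℝ} : IsInfinitesimal ι (ι r) ↔ r = 0 := by
  refine ⟨fun hr ↦ ?_, fun hr n hn ↦ ?_⟩
  · have hmono := ι.strictMono_of_real
    by_contra hne
    obtain ⟨n, hn⟩ := exists_nat_one_div_lt (abs_pos.mpr hne)
    have := hr (n + 1) n.succ_pos
    rw [abs_lt, ← map_neg, hmono.lt_iff_lt, hmono.lt_iff_lt, ← abs_lt] at this
    push_cast at this
    linarith
  · rw [hr, map_zero, abs_zero, ← map_zero ι]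
    exact ι.strictMono_of_real (by positivity)

theorem standardPart_eq_of_isInfinitesimal_sub {st : K → ℝ}
    (hst : ∀ x : K, 0 ≤ x → x ≤ 1 → IsInfinitesimal ι (x - ι (st x)))
    {x y : K} (hx : 0 ≤ x ∧ x ≤ 1) (hy : 0 ≤ y ∧ y ≤ 1) (hxy : IsInfinitesimal ι (x - y)) :
    st x = st y := by
  have hst_sub : IsInfinitesimal ι (ι (st x - st y)) := by
    have := ((hst x hx.1 hx.2).neg.add hxy).add (hst y hy.1 hy.2)
    rwa [map_sub, show ι (st x) - ι (st y) = -(x - ι (st x)) + (x - y) + (y - ι (st y)) by ring]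
  exact sub_eq_zero.mp (isInfinitesimal_map_iff.mp hst_sub)

end Infinitesimal

section FinitelyAdditive

variable {Ω M : Type*} [AddCommMonoid M] {P : Set Ω → M}

theorem monotone_of_additive_of_nonneg [PartialOrder M] [IsOrderedAddMonoid M]
    (hadd : ∀ A B : Set Ω, Disjoint A B → P (A ∪ B) = P A + P B)
    (hnonneg : ∀ A, 0 ≤ P A) : Monotone P := by
  intro S T hST
  rw [← Set.union_sdiff_cancel hST, hadd S (T \ S) disjoint_sdiff_self_right]
  exact le_add_of_nonneg_right (hnonneg _)

theorem eq_inter_add_inter_of_subset_union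
    (hadd : ∀ A B : Set Ω, Disjoint A B → P (A ∪ B) = P A + P B)
    {A B C : Set Ω} (hA : A ⊆ B ∪ C) (hBC : Disjoint B C) : P A = P (A ∩ B) + P (A ∩ C) := by
  rw [← hadd _ _ (hBC.mono Set.inter_subset_right Set.inter_subset_right),
    ← Set.inter_union_distrib_left, Set.inter_eq_left.mpr hA]

end FinitelyAdditive

theorem div_sub_div_eq_sub_mul_div {K : Type*} [Field K] {a g D G : K} (hD : D ≠ 0)
    (hDG : D + G ≠ 0) : (a + g) / (D + G) - a / D = g / (D + G) - a / D * (G / (D + G)) := by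
  field_simp
  ring

theorem stmt18_general {Ω : Type*} {K : Type*} [Field K] [LinearOrder K] [IsStrictOrderedRing K]
    (ι : ℝ →+* K)
    (st : K → ℝ)
    (hst : ∀ x : K, 0 ≤ x → x ≤ 1 → ∀ m : ℕ, 0 < m → |x - ι (st x)| < ι (1 / m))
    (P : Set Ω → K)
    (hadd : ∀ A B : Set Ω, Disjoint A B → P (A ∪ B) = P A + P B)
    (hrange : ∀ A : Set Ω, 0 ≤ P A ∧ P A ≤ 1)
    (B Bd Bgt : Set Ω)
    (hB : B = Bd ∪ Bgt) (hBdisj : Disjoint Bd Bgt)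
    (hPB : 0 < P B) (hPBd : 0 < P Bd)
    (hinf : ∀ n : ℕ, 0 < n → P Bgt / P B < ι (1 / n)) :
    ∀ A : Set Ω, A ⊆ B → st (P A / P B) = st (P (A ∩ Bd) / P Bd) := by
  intro A hA
  have hnonneg A := (hrange A).1
  have hmono := monotone_of_additive_of_nonneg hadd hnonneg
  have hsplitA := eq_inter_add_inter_of_subset_union hadd (hB ▸ hA) hBdisj
  have hsplitB : P B = P Bd + P Bgt := hB ▸ hadd _ _ hBdisj
  have hGB : 0 ≤ P Bgt / P B := div_nonneg (hnonneg _) hPB.le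
  have hrel : IsInfinitesimal ι (P Bgt / P B) := fun n hn ↦ by
    rw [abs_of_nonneg hGB]; exact hinf n hn
  have hy : 0 ≤ P (A ∩ Bd) / P Bd ∧ P (A ∩ Bd) / P Bd ≤ 1 :=
    ⟨div_nonneg (hnonneg _) hPBd.le, (div_le_one hPBd).mpr (hmono Set.inter_subset_right)⟩
  have hdiff : IsInfinitesimal ι (P A / P B - P (A ∩ Bd) / P Bd) := by
    rw [hsplitA, hsplitB, div_sub_div_eq_sub_mul_div hPBd.ne' (hsplitB ▸ hPB.ne'), ← hsplitB]
    refine (hrel.of_nonneg_of_le (div_nonneg (hnonneg _) hPB.le) ?_).sub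
      (hrel.of_nonneg_of_le (mul_nonneg hy.1 hGB) (mul_le_of_le_one_left hGB hy.2))
    gcongr
    exact hmono Set.inter_subset_right
  exact standardPart_eq_of_isInfinitesimal_sub hst
    ⟨div_nonneg (hnonneg _) hPB.le, (div_le_one hPB).mpr (hmono hA)⟩ hy hdiff

/-- Only the minimal-rank part matters for standard parts: if `B` is partitioned
into `B_d` and `B_{>d}` with `P(B_{>d})/P(B)` infinitesimal, then for any
`A ⊆ B`, `st(P(A)/P(B)) = st(P(A ∩ B_d)/P(B_d))`. -/
theorem stmt18 {Ω : Type*} {K : Type*} [Field K] [LinearOrder K] [IsStrictOrderedRing K]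
    (ι : ℝ →+* K) (hι : StrictMono ι)
    (st : K → ℝ)
    (hst : ∀ x : K, 0 ≤ x → x ≤ 1 → ∀ m : ℕ, 0 < m → |x - ι (st x)| < ι (1 / m))
    (P : Set Ω → K)
    (hadd : ∀ A B : Set Ω, Disjoint A B → P (A ∪ B) = P A + P B)
    (hnorm : P Set.univ = 1)
    (hrange : ∀ A : Set Ω, 0 ≤ P A ∧ P A ≤ 1)
    (B Bd Bgt : Set Ω)
    (hB : B = Bd ∪ Bgt) (hBdisj : Disjoint Bd Bgt)
    (hPB : 0 < P B) (hPBd : 0 < P Bd)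
    (hinf : ∀ n : ℕ, 0 < n → P Bgt / P B < ι (1 / n)) :
    ∀ A : Set Ω, A ⊆ B → st (P A / P B) = st (P (A ∩ Bd) / P Bd) :=
  stmt18_general ι st hst P hadd hrange B Bd Bgt hB hBdisj hPB hPBd hinf
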